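/- arXiv:1108.4720 — 4 statements merged into one kernel-verified Lean document; each statement's English description precedes it below -/
import Mathlib

section
/- Let Δη ∈ ℝ with 0 < |Δη| ≪ 1 and define u(x,t) = 1 + x + Δη(1 + x + t(1 + x)) for x ≤ 0 and u(x,t) = 1 + Δη(1 − x + t) for x > 0. Then u is continuous at x = 0, satisfies u_tt − u_xx = 0 away from x = 0, u(−1,t) = 0, (u_t + u_x)(1,t) = 0, and the jump condition lim_{ε→0⁺}[u_x(−ε,t) − u_x(ε,t)] = (1+Δη) u(0,t) holds up to terms of order (Δη)². -/
/-!
Both branches of `u` are affine in `x` for fixed `t` and affine in `t` for fixed `x`, so both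
second derivatives vanish away from the interface `x = 0`. The slopes in `x` are `1 + Δη (1 + t)`
on the left and `-Δη` on the right; their difference `1 + Δη (2 + t)` equals
`(1 + Δη) u(0,t) = (1 + Δη)(1 + Δη (1 + t))` up to the term `Δη² (1 + t)`.
-/

open Filter Set Topology

section Affine

variable {𝕜 : Type*} [NontriviallyNormedField 𝕜] {f : 𝕜 → 𝕜}

theorem deriv_of_forall_eq_mul_add (a b : 𝕜) (hf : ∀ y, f y = a * y + b) (x : 𝕜) :
    deriv f x = a := by
  obtain rfl : f = fun y => a * y + b := funext hf
  simp

theorem deriv_deriv_of_forall_eq_mul_add (a b : 𝕜) (hf : ∀ y, f y = a * y + b) (x : 𝕜) :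
    deriv (deriv f) x = 0 := by
  rw [funext (deriv_of_forall_eq_mul_add a b hf), deriv_const]

end Affine

section Piecewise

variable {α : Type*} {f g : ℝ → α} {c x : ℝ}

theorem ite_le_eventuallyEq_left (hx : x < c) :
    (fun y => if y ≤ c then f y else g y) =ᶠ[𝓝 x] f :=
  (eventually_le_nhds hx).mono fun _ hy => if_pos hy

theorem ite_le_eventuallyEq_right (hx : c < x) :
    (fun y => if y ≤ c then f y else g y) =ᶠ[𝓝 x] g :=
  (eventually_gt_nhds hx).mono fun _ hy => if_neg (not_le.mpr hy)

end Piecewise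

/-- The first-order expansion `u^s + Δη u₁`, where `u^s` equals `1 + x` for `x ≤ 0` and `1` for
`x > 0` is the static solution at `η = 1`. -/
noncomputable def firstOrderSolution (Δη : ℝ) (x t : ℝ) : ℝ :=
  if x ≤ 0 then 1 + x + Δη * (1 + x + t * (1 + x)) else 1 + Δη * (1 - x + t)

namespace firstOrderSolution

variable (Δη : ℝ)

theorem continuous_x (t : ℝ) : Continuous fun x => firstOrderSolution Δη x t :=
  Continuous.if_le (by fun_prop) (by fun_prop) continuous_id continuous_const
    fun x hx => by rw [hx]; ring

theorem deriv_x_of_neg {x : ℝ} (t : ℝ) (hx : x < 0) :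
    deriv (fun y => firstOrderSolution Δη y t) x = 1 + Δη * (1 + t) := by
  unfold firstOrderSolution
  rw [(ite_le_eventuallyEq_left hx).deriv_eq]
  exact deriv_of_forall_eq_mul_add _ (1 + Δη * (1 + t)) (fun y => by ring) x

theorem deriv_x_of_pos {x : ℝ} (t : ℝ) (hx : 0 < x) :
    deriv (fun y => firstOrderSolution Δη y t) x = -Δη := by
  unfold firstOrderSolution
  rw [(ite_le_eventuallyEq_right hx).deriv_eq]
  exact deriv_of_forall_eq_mul_add _ (1 + Δη * (1 + t)) (fun y => by ring) x

theorem deriv_deriv_x {x : ℝ} (t : ℝ) (hx : x ≠ 0) :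
    deriv (deriv fun y => firstOrderSolution Δη y t) x = 0 := by
  unfold firstOrderSolution
  rcases hx.lt_or_gt with hx | hx
  · rw [(ite_le_eventuallyEq_left hx).deriv.deriv_eq]
    exact deriv_deriv_of_forall_eq_mul_add (1 + Δη * (1 + t)) (1 + Δη * (1 + t))
      (fun y => by ring) x
  · rw [(ite_le_eventuallyEq_right hx).deriv.deriv_eq]
    exact deriv_deriv_of_forall_eq_mul_add (-Δη) (1 + Δη * (1 + t)) (fun y => by ring) x

theorem deriv_t_of_pos {x : ℝ} (t : ℝ) (hx : 0 < x) :
    deriv (fun s => firstOrderSolution Δη x s) t = Δη := by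
  simp only [firstOrderSolution, if_neg (not_le.mpr hx)]
  exact deriv_of_forall_eq_mul_add Δη (1 + Δη * (1 - x)) (fun s => by ring) t

theorem deriv_deriv_t (x t : ℝ) :
    deriv (deriv fun s => firstOrderSolution Δη x s) t = 0 := by
  by_cases hx : x ≤ 0
  · simp only [firstOrderSolution, if_pos hx]
    exact deriv_deriv_of_forall_eq_mul_add (Δη * (1 + x)) ((1 + x) * (1 + Δη))
      (fun s => by ring) t
  · simp only [firstOrderSolution, if_neg hx]
    exact deriv_deriv_of_forall_eq_mul_add Δη (1 + Δη * (1 - x)) (fun s => by ring) t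

theorem tendsto_jump (t : ℝ) :
    Tendsto (fun ε => deriv (fun y => firstOrderSolution Δη y t) (-ε) -
        deriv (fun y => firstOrderSolution Δη y t) ε) (𝓝[>] 0)
      (𝓝 ((1 + Δη) * firstOrderSolution Δη 0 t - Δη ^ 2 * (1 + t))) := by
  refine tendsto_const_nhds.congr' ?_
  filter_upwards [self_mem_nhdsWithin] with ε (hε : 0 < ε)
  rw [deriv_x_of_neg Δη t (neg_neg_of_pos hε), deriv_x_of_pos Δη t hε,
    firstOrderSolution, if_pos le_rfl]
  ring

theorem deriv_deriv_t_sub_deriv_deriv_x {x : ℝ} (t : ℝ) (hx : x ≠ 0) :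
    deriv (deriv fun s => firstOrderSolution Δη x s) t -
      deriv (deriv fun y => firstOrderSolution Δη y t) x = 0 := by
  rw [deriv_deriv_t, deriv_deriv_x Δη t hx, sub_zero]

theorem deriv_t_add_deriv_x_one (t : ℝ) :
    deriv (fun s => firstOrderSolution Δη 1 s) t +
      deriv (fun y => firstOrderSolution Δη y t) 1 = 0 := by
  rw [deriv_t_of_pos Δη t one_pos, deriv_x_of_pos Δη t one_pos, add_neg_cancel]

end firstOrderSolution

open firstOrderSolution in
theorem stmt3_general (Δη : ℝ) :
    let u : ℝ → ℝ → ℝ := fun x t =>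
      if x ≤ 0 then 1 + x + Δη * (1 + x + t * (1 + x)) else 1 + Δη * (1 - x + t)
    (∀ t : ℝ, ContinuousAt (fun x => u x t) 0) ∧
    (∀ x t : ℝ, x ≠ 0 →
      deriv (fun s => deriv (fun s' => u x s') s) t -
        deriv (fun y => deriv (fun y' => u y' t) y) x = 0) ∧
    (∀ t : ℝ, u (-1) t = 0) ∧
    (∀ t : ℝ, deriv (fun s => u 1 s) t + deriv (fun y => u y t) 1 = 0) ∧
    (∀ t : ℝ, Tendsto (fun ε => deriv (fun y => u y t) (-ε) - deriv (fun y => u y t) ε)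
        (nhdsWithin 0 (Ioi 0)) (nhds ((1 + Δη) * u 0 t - Δη ^ 2 * (1 + t)))) :=
  ⟨fun t => (continuous_x Δη t).continuousAt,
    fun x t hx => deriv_deriv_t_sub_deriv_deriv_x Δη t hx, fun t => by norm_num,
    deriv_t_add_deriv_x_one Δη, tendsto_jump Δη⟩

/-- First-order perturbation solution of `u_tt - u_xx = (1+Δη) δ(x) u`:
it is continuous at `x = 0`, solves the wave equation away from `x = 0`,
satisfies the boundary conditions, and satisfies the jump condition up to `O((Δη)²)`. -/
theorem stmt3 (Δη : ℝ) (h₁ : 0 < |Δη|) (h₂ : |Δη| < 1) :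
    let u : ℝ → ℝ → ℝ := fun x t =>
      if x ≤ 0 then 1 + x + Δη * (1 + x + t * (1 + x)) else 1 + Δη * (1 - x + t)
    (∀ t : ℝ, ContinuousAt (fun x => u x t) 0) ∧
    (∀ x t : ℝ, x ≠ 0 →
      deriv (fun s => deriv (fun s' => u x s') s) t -
        deriv (fun y => deriv (fun y' => u y' t) y) x = 0) ∧
    (∀ t : ℝ, u (-1) t = 0) ∧
    (∀ t : ℝ, deriv (fun s => u 1 s) t + deriv (fun y => u y t) 1 = 0) ∧
    (∀ t : ℝ, Tendsto (fun ε => deriv (fun y => u y t) (-ε) - deriv (fun y => u y t) ε)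
        (nhdsWithin 0 (Ioi 0)) (nhds ((1 + Δη) * u 0 t - Δη ^ 2 * (1 + t)))) :=
  stmt3_general Δη
end

section
/- For the linearized sine-Gordon equation, the piecewise function u^s(x) = C(1+e²)(e^{−x} − e^{x+2}) for x < 0 and u^s(x) = C(1−e²)(eˣ + e^{2−x}) for x > 0 satisfies −(u^s)'' + u^s = 0 away from 0, the boundary conditions u^s(−1)=0 and (u^s)'(1)=0 (in the steady sense), is continuous at 0, and the jump condition [(u^s)'](0⁻) − [(u^s)'](0⁺) = η u^s(0) holds if and only if η = 2 coth(2). -/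
/-!
Writing `e = exp 1`, the left branch is `A sinh (x + 1)` and the right branch is
`B cosh (x - 1)`, with `A = -2eC(1 + e²)` and `B = 2eC(1 - e²)`. Both solve `u'' = u`; the
first vanishes at `-1` and the derivative of the second vanishes at `1`. Continuity at `0` is
the relation `A sinh 1 = B cosh 1`, and with it the derivative jump `A cosh 1 + B sinh 1`
equals `B (cosh² 1 + sinh² 1) / sinh 1`, which the double-angle formulas turn into
`2 coth 2 · B cosh 1 = 2 coth 2 · u 0`.
-/

open Real Filter Set Topology

lemma hasDerivAt_const_mul_sinh_add (A c x : ℝ) :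
    HasDerivAt (fun y => A * sinh (y + c)) (A * cosh (x + c)) x := by
  simpa using ((hasDerivAt_sinh (x + c)).comp x ((hasDerivAt_id x).add_const c)).const_mul A

lemma hasDerivAt_const_mul_cosh_add (A c x : ℝ) :
    HasDerivAt (fun y => A * cosh (y + c)) (A * sinh (x + c)) x := by
  simpa using ((hasDerivAt_cosh (x + c)).comp x ((hasDerivAt_id x).add_const c)).const_mul A

lemma hasDerivAt_const_mul_sinh_sub (A c x : ℝ) :
    HasDerivAt (fun y => A * sinh (y - c)) (A * cosh (x - c)) x := by
  simpa using ((hasDerivAt_sinh (x - c)).comp x ((hasDerivAt_id x).sub_const c)).const_mul A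

lemma hasDerivAt_const_mul_cosh_sub (A c x : ℝ) :
    HasDerivAt (fun y => A * cosh (y - c)) (A * sinh (x - c)) x := by
  simpa using ((hasDerivAt_cosh (x - c)).comp x ((hasDerivAt_id x).sub_const c)).const_mul A

noncomputable def steadyState (A B x : ℝ) : ℝ :=
  if x < 0 then A * sinh (x + 1) else B * cosh (x - 1)

namespace steadyState

variable {A B x : ℝ}

lemma eventuallyEq_of_neg (hx : x < 0) :
    steadyState A B =ᶠ[𝓝 x] fun y => A * sinh (y + 1) := by
  filter_upwards [Iio_mem_nhds hx] with y hy
  exact if_pos hy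

lemma eventuallyEq_of_pos (hx : 0 < x) :
    steadyState A B =ᶠ[𝓝 x] fun y => B * cosh (y - 1) := by
  filter_upwards [Ioi_mem_nhds hx] with y hy
  exact if_neg (not_lt.2 (le_of_lt hy))

lemma deriv_of_neg (hx : x < 0) : deriv (steadyState A B) x = A * cosh (x + 1) :=
  (eventuallyEq_of_neg hx).deriv_eq.trans (hasDerivAt_const_mul_sinh_add A 1 x).deriv

lemma deriv_of_pos (hx : 0 < x) : deriv (steadyState A B) x = B * sinh (x - 1) :=
  (eventuallyEq_of_pos hx).deriv_eq.trans (hasDerivAt_const_mul_cosh_sub B 1 x).deriv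

lemma deriv_deriv_of_ne (hx : x ≠ 0) : deriv (deriv (steadyState A B)) x = steadyState A B x := by
  rcases hx.lt_or_gt with hx | hx
  · rw [(eventuallyEq_of_neg hx).deriv.deriv_eq,
      funext fun y => (hasDerivAt_const_mul_sinh_add A 1 y).deriv,
      (hasDerivAt_const_mul_cosh_add A 1 x).deriv, steadyState, if_pos hx]
  · rw [(eventuallyEq_of_pos hx).deriv.deriv_eq,
      funext fun y => (hasDerivAt_const_mul_cosh_sub B 1 y).deriv,
      (hasDerivAt_const_mul_sinh_sub B 1 x).deriv, steadyState, if_neg hx.not_gt]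

lemma apply_neg_one : steadyState A B (-1) = 0 := by
  norm_num [steadyState]

lemma deriv_one : deriv (steadyState A B) 1 = 0 := by
  simp [deriv_of_pos one_pos]

lemma apply_zero : steadyState A B 0 = B * cosh 1 := by
  simp [steadyState]

lemma continuous (h : A * sinh 1 = B * cosh 1) : Continuous (steadyState A B) := by
  refine Continuous.if (fun a ha => ?_) (by fun_prop) (by fun_prop)
  rw [show {x : ℝ | x < 0} = Iio 0 from rfl, frontier_Iio, mem_singleton_iff] at ha
  simpa [ha] using h

lemma tendsto_deriv_jump :
    Tendsto (fun ε => deriv (steadyState A B) (-ε) - deriv (steadyState A B) ε) (𝓝[>] 0)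
      (𝓝 (A * cosh 1 + B * sinh 1)) := by
  have hlim : Tendsto (fun ε => A * cosh (-ε + 1) - B * sinh (ε - 1)) (𝓝 0)
      (𝓝 (A * cosh 1 + B * sinh 1)) := by
    simpa using (show Continuous fun ε => A * cosh (-ε + 1) - B * sinh (ε - 1) by
      fun_prop).tendsto 0
  refine (hlim.mono_left nhdsWithin_le_nhds).congr' ?_
  filter_upwards [self_mem_nhdsWithin] with ε (hε : 0 < ε)
  rw [deriv_of_neg (neg_neg_of_pos hε), deriv_of_pos hε]

lemma jump_eq (h : A * sinh 1 = B * cosh 1) :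
    A * cosh 1 + B * sinh 1 = 2 * (cosh 2 / sinh 2) * steadyState A B 0 := by
  have hs : sinh 1 ≠ 0 := (sinh_pos_iff.2 one_pos).ne'
  have hc : cosh 1 ≠ 0 := (cosh_pos 1).ne'
  have hA : A = B * cosh 1 / sinh 1 := by field_simp; linarith
  rw [apply_zero, hA, show (2 : ℝ) = 2 * 1 by norm_num, cosh_two_mul, sinh_two_mul]
  field_simp

lemma tendsto_deriv_jump_iff (η : ℝ) (hB : B ≠ 0) (h : A * sinh 1 = B * cosh 1) :
    Tendsto (fun ε => deriv (steadyState A B) (-ε) - deriv (steadyState A B) ε) (𝓝[>] 0)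
      (𝓝 (η * steadyState A B 0)) ↔ η = 2 * (cosh 2 / sinh 2) := by
  have hu0 : steadyState A B 0 ≠ 0 := by
    rw [apply_zero]
    exact mul_ne_zero hB (cosh_pos 1).ne'
  have hjump := jump_eq h ▸ tendsto_deriv_jump (A := A) (B := B)
  refine ⟨fun hη => mul_right_cancel₀ hu0 (tendsto_nhds_unique hη hjump), ?_⟩
  rintro rfl
  exact hjump

end steadyState

lemma exp_branches_eq_steadyState (C x : ℝ) :
    (if x < 0 then C * (1 + exp 1 ^ 2) * (exp (-x) - exp (x + 2))
      else C * (1 - exp 1 ^ 2) * (exp x + exp (2 - x))) =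
    steadyState (-2 * exp 1 * C * (1 + exp 1 ^ 2)) (2 * exp 1 * C * (1 - exp 1 ^ 2)) x := by
  have h2 : exp 2 = exp 1 ^ 2 := by rw [← exp_nat_mul]; norm_num
  unfold steadyState
  split_ifs
  · simp only [sinh_eq, exp_neg, exp_add, h2]
    field_simp
    ring
  · simp only [cosh_eq, exp_neg, exp_sub, h2]
    field_simp

/-- Steady state of the linearized sine-Gordon equation `u_tt - u_xx = (η δ(x) - 1) u`:
the jump condition holds iff `η = 2 coth 2`. -/
theorem stmt7 (C η : ℝ) (hC : C ≠ 0) :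
    let e : ℝ := Real.exp 1
    let u : ℝ → ℝ := fun x =>
      if x < 0 then C * (1 + e ^ 2) * (Real.exp (-x) - Real.exp (x + 2))
      else C * (1 - e ^ 2) * (Real.exp x + Real.exp (2 - x))
    (∀ x : ℝ, -1 < x → x < 1 → x ≠ 0 → -(deriv (deriv u) x) + u x = 0) ∧
    u (-1) = 0 ∧
    deriv u 1 = 0 ∧
    ContinuousAt u 0 ∧
    (Tendsto (fun ε => deriv u (-ε) - deriv u ε) (nhdsWithin 0 (Ioi 0))
        (nhds (η * u 0)) ↔ η = 2 * (Real.cosh 2 / Real.sinh 2)) := by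
  intro e u
  set A := -2 * e * C * (1 + e ^ 2)
  set B := 2 * e * C * (1 - e ^ 2)
  have hu : u = steadyState A B := funext (exp_branches_eq_steadyState C)
  have he : 1 < e := one_lt_exp_iff.2 one_pos
  have hB : B ≠ 0 := by
    have : 1 - e ^ 2 ≠ 0 := by nlinarith
    positivity
  have hcont : A * sinh 1 = B * cosh 1 := by
    rw [sinh_eq, cosh_eq, exp_neg]
    field_simp
    ring
  rw [hu]
  exact ⟨fun x _ _ hx => by rw [steadyState.deriv_deriv_of_ne hx, neg_add_cancel],
    steadyState.apply_neg_one, steadyState.deriv_one,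
    (steadyState.continuous hcont).continuousAt, steadyState.tendsto_deriv_jump_iff η hB hcont⟩
end

section
/- For all natural numbers m and n with m of different parity from n (one even, one odd), ∫_{−1}^{1} P_m'(x) P_n'(x) dx = 0. -/
/-!
Each `Pₙ` has the parity of `n`, i.e. `Pₙ(-x) = (-1)ⁿ Pₙ(x)`, as the three-term recurrence shows.
Differentiating flips the parity, so `Pₘ' Pₙ'` has parity `m + n`; when `m + n` is odd it is an
odd function, and its integral over the symmetric interval `[-1, 1]` vanishes.
-/

open Polynomial

/-- The Legendre polynomials on `[-1,1]`, defined by the three-term recurrence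
`(n+2) P_{n+2} = (2n+3) x P_{n+1} - (n+1) P_n` with `P_0 = 1`, `P_1 = x`. -/
noncomputable def legendre : ℕ → Polynomial ℝ
  | 0 => 1
  | 1 => X
  | n + 2 => ((2 * (n : ℝ) + 3) / ((n : ℝ) + 2)) • (X * legendre (n + 1)) -
      (((n : ℝ) + 1) / ((n : ℝ) + 2)) • legendre n

theorem intervalIntegral.integral_eq_zero_of_odd {E : Type*} [NormedAddCommGroup E]
    [NormedSpace ℝ E] {f : ℝ → E} (hf : Function.Odd f) (a : ℝ) :
    ∫ x in -a..a, f x = 0 := by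
  have h := intervalIntegral.integral_comp_neg (a := -a) (b := a) f
  simp only [hf.eq, intervalIntegral.integral_neg, neg_neg] at h
  have := IsAddTorsionFree.of_isTorsionFree ℝ E
  exact neg_eq_self.mp h

theorem Polynomial.derivative_comp_neg_X_of_comp_neg_X_eq_smul {R : Type*} [CommRing R]
    {p : R[X]} {c : R} (hp : p.comp (-X) = c • p) :
    (derivative p).comp (-X) = -c • derivative p := by
  have h := congrArg derivative hp
  rw [derivative_comp, derivative_smul, derivative_neg, derivative_X] at h
  rw [neg_smul, ← h, neg_one_mul, neg_neg]

theorem legendre_comp_neg_X : ∀ n : ℕ, (legendre n).comp (-X) = (-1 : ℝ) ^ n • legendre n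
  | 0 => by simp [legendre]
  | 1 => by simp [legendre]
  | n + 2 => by
    simp only [legendre, sub_comp, smul_comp, mul_comp, X_comp, legendre_comp_neg_X n,
      legendre_comp_neg_X (n + 1), pow_succ, neg_mul, mul_smul_comm]
    module

theorem legendre_derivative_comp_neg_X (n : ℕ) :
    (derivative (legendre n)).comp (-X) = (-1 : ℝ) ^ (n + 1) • derivative (legendre n) := by
  rw [derivative_comp_neg_X_of_comp_neg_X_eq_smul (legendre_comp_neg_X n), pow_succ, mul_neg_one]

theorem odd_eval_derivative_legendre_mul {m n : ℕ} (h : m % 2 ≠ n % 2) :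
    Function.Odd fun x ↦ (derivative (legendre m)).eval x * (derivative (legendre n)).eval x := by
  have hsign : (-1 : ℝ) ^ (m + 1) * (-1 : ℝ) ^ (n + 1) = -1 := by
    rw [← pow_add, Odd.neg_one_pow (Nat.odd_iff.mpr (by omega))]
  intro x
  have hm := congrArg (eval x) (legendre_derivative_comp_neg_X m)
  have hn := congrArg (eval x) (legendre_derivative_comp_neg_X n)
  simp only [eval_comp, eval_neg, eval_X, eval_smul, smul_eq_mul] at hm hn
  simp only [hm, hn]
  linear_combination (eval x (derivative (legendre m)) * eval x (derivative (legendre n))) * hsign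

/-- If `m` and `n` have different parity, then `∫₋₁¹ Pₘ'(x) Pₙ'(x) dx = 0`. -/
theorem stmt9 (m n : ℕ) (h : m % 2 ≠ n % 2) :
    ∫ x in (-1 : ℝ)..1,
      (Polynomial.derivative (legendre m)).eval x *
        (Polynomial.derivative (legendre n)).eval x = 0 :=
  intervalIntegral.integral_eq_zero_of_odd (odd_eval_derivative_legendre_mul h) 1
end

section
/- If m and n are both even or both odd natural numbers with m ≥ n, then ∫_{−1}^{1} P_m'(x) P_n'(x) dx = n(n+1). -/
open Polynomial

/-!
Integrating by parts, `∫ Pₘ' Pₙ' = [Pₘ Pₙ']₋₁¹ - ∫ Pₘ Pₙ''`. The last integral vanishes: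
`Pₙ''` lies in the span of `P₀, …, Pₘ₋₁` because `P_{k+2}' = P_k' + (2k+3) P_{k+1}`, and the
`Pₖ` are mutually orthogonal, being eigenvectors of the Legendre operator `((1 - x²) y')'`,
which is symmetric for `∫₋₁¹` since `1 - x²` vanishes at `±1`. For the boundary term,
`Pₖ(±1) = (±1)ᵏ`, and the Legendre equation evaluated at `±1` gives
`Pₙ'(±1) = (±1)ⁿ⁺¹ n(n+1)/2`; the parity assumption makes the two boundary terms add up.
-/

open Set

theorem legendre_add_two (n : ℕ) : legendre (n + 2) =
    ((2 * (n : ℝ) + 3) / ((n : ℝ) + 2)) • (X * legendre (n + 1)) -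
      (((n : ℝ) + 1) / ((n : ℝ) + 2)) • legendre n := rfl

theorem legendre_eval_of_sq_eq_one {s : ℝ} (hs : s ^ 2 = 1) (n : ℕ) :
    (legendre n).eval s = s ^ n := by
  induction n using Nat.twoStepInduction with
  | zero => simp [legendre]
  | one => simp [legendre]
  | more n ih ih' =>
    have hn : (n : ℝ) + 2 ≠ 0 := by positivity
    simp only [legendre_add_two, eval_sub, eval_smul, eval_mul, eval_X, smul_eq_mul, ih, ih']
    field_simp
    linear_combination (n + 1) * s ^ n * hs

theorem derivative_legendre_pair (n : ℕ) :
    X * derivative (legendre (n + 1)) =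
      derivative (legendre n) + ((n : ℝ) + 1) • legendre (n + 1) ∧
    derivative (legendre (n + 1)) =
      X * derivative (legendre n) + ((n : ℝ) + 1) • legendre n := by
  induction n with
  | zero => constructor <;> simp [legendre]
  | succ n ih =>
    obtain ⟨hX, hD⟩ := ih
    have hn : (n : ℝ) + 2 ≠ 0 := by positivity
    have hB : derivative (legendre (n + 2)) =
        derivative (legendre n) + (2 * (n : ℝ) + 3) • legendre (n + 1) := by
      rw [legendre_add_two, derivative_sub, derivative_smul, derivative_smul, derivative_mul,
        derivative_X, one_mul, smul_add, hX]
      match_scalars <;> field_simp <;> ring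
    constructor
    · rw [hB, mul_add, mul_smul_comm, legendre_add_two, hD]
      push_cast
      match_scalars <;> field_simp <;> ring
    · rw [hB, hX]
      push_cast
      match_scalars <;> ring

theorem X_mul_derivative_legendre_succ (n : ℕ) :
    X * derivative (legendre (n + 1)) =
      derivative (legendre n) + ((n : ℝ) + 1) • legendre (n + 1) :=
  (derivative_legendre_pair n).1

theorem derivative_legendre_succ (n : ℕ) :
    derivative (legendre (n + 1)) = X * derivative (legendre n) + ((n : ℝ) + 1) • legendre n :=
  (derivative_legendre_pair n).2

theorem derivative_legendre_add_two (n : ℕ) :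
    derivative (legendre (n + 2)) =
      derivative (legendre n) + (2 * (n : ℝ) + 3) • legendre (n + 1) := by
  rw [derivative_legendre_succ, X_mul_derivative_legendre_succ, add_assoc, ← add_smul]
  push_cast
  ring_nf

noncomputable def legendreOperator (p : ℝ[X]) : ℝ[X] := derivative ((1 - X ^ 2) * derivative p)

theorem legendreOperator_legendre (n : ℕ) :
    legendreOperator (legendre n) = -((n : ℝ) * (n + 1)) • legendre n := by
  cases n with
  | zero => simp [legendreOperator, legendre]
  | succ n =>
    have hfirst : (1 - X ^ 2) * derivative (legendre (n + 1)) =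
        ((n : ℝ) + 1) • (legendre n - X * legendre (n + 1)) := by
      rw [sub_mul, one_mul, sq, mul_assoc, X_mul_derivative_legendre_succ,
        derivative_legendre_succ, smul_sub, mul_add, mul_smul_comm]
      abel
    rw [legendreOperator, hfirst, derivative_smul, derivative_sub, derivative_mul, derivative_X,
      one_mul, X_mul_derivative_legendre_succ]
    push_cast
    match_scalars <;> ring

theorem legendreOperator_eval_of_sq_eq_one {s : ℝ} (hs : s ^ 2 = 1) (p : ℝ[X]) :
    (legendreOperator p).eval s = -2 * s * (derivative p).eval s := by
  simp only [legendreOperator, derivative_mul, derivative_sub, derivative_one, derivative_X_pow,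
    eval_add, eval_mul, eval_sub, eval_one, eval_pow, eval_X, eval_zero, eval_C, hs]
  ring

theorem derivative_legendre_eval_of_sq_eq_one {s : ℝ} (hs : s ^ 2 = 1) (n : ℕ) :
    (derivative (legendre n)).eval s = (n : ℝ) * (n + 1) / 2 * s ^ (n + 1) := by
  have h := congrArg (eval s) (legendreOperator_legendre n)
  rw [legendreOperator_eval_of_sq_eq_one hs, eval_smul, legendre_eval_of_sq_eq_one hs,
    smul_eq_mul] at h
  linear_combination (-s / 2) * h - (derivative (legendre n)).eval s * hs


noncomputable def l2Form : LinearMap.BilinForm ℝ ℝ[X] :=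
  LinearMap.mk₂ ℝ (fun p q => ∫ x in (-1 : ℝ)..1, p.eval x * q.eval x)
    (fun p₁ p₂ q => by
      simp only [eval_add, add_mul]
      exact intervalIntegral.integral_add (Continuous.intervalIntegrable (by fun_prop) _ _)
        (Continuous.intervalIntegrable (by fun_prop) _ _))
    (fun c p q => by
      simp only [eval_smul, smul_eq_mul, mul_assoc]
      exact intervalIntegral.integral_const_mul _ _)
    (fun p q₁ q₂ => by
      simp only [eval_add, mul_add]
      exact intervalIntegral.integral_add (Continuous.intervalIntegrable (by fun_prop) _ _)
        (Continuous.intervalIntegrable (by fun_prop) _ _))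
    (fun c p q => by
      simp only [eval_smul, smul_eq_mul, mul_left_comm]
      exact intervalIntegral.integral_const_mul _ _)

theorem l2Form_apply (p q : ℝ[X]) : l2Form p q = ∫ x in (-1 : ℝ)..1, p.eval x * q.eval x := rfl

theorem l2Form_comm (p q : ℝ[X]) : l2Form p q = l2Form q p := by
  simp only [l2Form_apply, mul_comm]

theorem l2Form_mul_left (r p q : ℝ[X]) : l2Form (r * p) q = l2Form p (r * q) := by
  simp only [l2Form_apply, eval_mul, mul_assoc, mul_left_comm]

theorem l2Form_derivative_add (p q : ℝ[X]) :
    l2Form (derivative p) q + l2Form p (derivative q) = (p * q).eval 1 - (p * q).eval (-1) := by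
  rw [← intervalIntegral.integral_eq_sub_of_hasDerivAt (fun x _ => (p * q).hasDerivAt x)
    ((derivative (p * q)).continuous.intervalIntegrable _ _), l2Form_apply, l2Form_apply,
    ← intervalIntegral.integral_add (Continuous.intervalIntegrable (by fun_prop) _ _)
      (Continuous.intervalIntegrable (by fun_prop) _ _)]
  simp only [derivative_mul, eval_add, eval_mul]

theorem l2Form_legendreOperator (p q : ℝ[X]) :
    l2Form (legendreOperator p) q = l2Form p (legendreOperator q) := by
  have hparts (p q : ℝ[X]) :
      l2Form (legendreOperator p) q = -l2Form ((1 - X ^ 2) * derivative p) (derivative q) := by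
    have hboundary {s : ℝ} (hs : s ^ 2 = 1) : ((1 - X ^ 2) * derivative p * q).eval s = 0 := by
      simp [hs]
    have h := l2Form_derivative_add ((1 - X ^ 2) * derivative p) q
    rw [hboundary (one_pow 2), hboundary (by norm_num), sub_zero] at h
    exact eq_neg_of_add_eq_zero_left h
  rw [hparts, l2Form_comm p, hparts, l2Form_mul_left, l2Form_comm]

theorem l2Form_legendre_of_ne {m k : ℕ} (h : m ≠ k) : l2Form (legendre m) (legendre k) = 0 := by
  have hsymm := l2Form_legendreOperator (legendre m) (legendre k)
  simp only [legendreOperator_legendre, map_smul, LinearMap.smul_apply, smul_eq_mul] at hsymm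
  have hne : (m : ℝ) - k ≠ 0 := sub_ne_zero.2 (mod_cast h)
  have hfactor : ((m : ℝ) - k) * (m + k + 1) * l2Form (legendre m) (legendre k) = 0 := by
    linear_combination -hsymm
  simpa [hne, (by positivity : (m : ℝ) + k + 1 ≠ 0)] using hfactor

theorem derivative_legendre_mem_span (n : ℕ) :
    derivative (legendre n) ∈ Submodule.span ℝ (legendre '' Iio n) := by
  induction n using Nat.twoStepInduction with
  | zero => simp [legendre]
  | one => exact Submodule.subset_span ⟨0, by simp, by simp [legendre]⟩
  | more n ih _ =>
    rw [derivative_legendre_add_two]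
    exact add_mem (Submodule.span_mono (image_mono (Iio_subset_Iio (by omega))) ih)
      (Submodule.smul_mem _ _ (Submodule.subset_span ⟨n + 1, by simp, rfl⟩))

theorem derivative_mem_span_legendre {n : ℕ} {p : ℝ[X]}
    (hp : p ∈ Submodule.span ℝ (legendre '' Iio n)) :
    derivative p ∈ Submodule.span ℝ (legendre '' Iio n) := by
  have hle : Submodule.span ℝ (legendre '' Iio n) ≤
      (Submodule.span ℝ (legendre '' Iio n)).comap derivative := by
    refine Submodule.span_le.2 ?_
    rintro _ ⟨k, hk, rfl⟩
    exact Submodule.span_mono (image_mono (Iio_subset_Iio (le_of_lt hk)))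
      (derivative_legendre_mem_span k)
  exact hle hp

theorem l2Form_legendre_eq_zero_of_mem_span {m : ℕ} {q : ℝ[X]}
    (hq : q ∈ Submodule.span ℝ (legendre '' Iio m)) : l2Form (legendre m) q = 0 := by
  have hle : Submodule.span ℝ (legendre '' Iio m) ≤ LinearMap.ker (l2Form (legendre m)) := by
    refine Submodule.span_le.2 ?_
    rintro _ ⟨k, hk, rfl⟩
    exact l2Form_legendre_of_ne (ne_of_gt hk)
  exact hle hq

/-- If `m` and `n` have the same parity and `m ≥ n`, then
`∫₋₁¹ Pₘ'(x) Pₙ'(x) dx = n(n+1)`. -/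
theorem stmt10 (m n : ℕ) (hpar : m % 2 = n % 2) (hmn : n ≤ m) :
    ∫ x in (-1 : ℝ)..1,
      (Polynomial.derivative (legendre m)).eval x *
        (Polynomial.derivative (legendre n)).eval x = (n : ℝ) * ((n : ℝ) + 1) := by
  have hinterior : l2Form (legendre m) (derivative (derivative (legendre n))) = 0 :=
    l2Form_legendre_eq_zero_of_mem_span <| Submodule.span_mono (image_mono (Iio_subset_Iio hmn)) <|
      derivative_mem_span_legendre (derivative_legendre_mem_span n)
  have hsign : (-1 : ℝ) ^ m * (-1) ^ (n + 1) = -1 := by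
    rw [neg_one_pow_eq_pow_mod_two, hpar, ← neg_one_pow_eq_pow_mod_two, pow_succ, ← mul_assoc,
      ← mul_pow]
    norm_num
  have hparts := l2Form_derivative_add (legendre m) (derivative (legendre n))
  rw [hinterior, add_zero, eval_mul, eval_mul, legendre_eval_of_sq_eq_one (one_pow 2),
    legendre_eval_of_sq_eq_one (by norm_num), derivative_legendre_eval_of_sq_eq_one (one_pow 2),
    derivative_legendre_eval_of_sq_eq_one (by norm_num)] at hparts
  rw [← l2Form_apply, hparts]
  linear_combination (-(n : ℝ) * (n + 1) / 2) * hsign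
end
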